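/- arXiv:2201.12623 — 2 statements merged into one kernel-verified Lean document; each statement's English description precedes it below -/
import Mathlib

section
/- Let 0<r<1 and α≥1/2. For every ζ on the circular boundary arcs Γ₁∪Γ₂ of the sector ring Ω (i.e., ζ = ρe^{iτ} with ρ∈{r,1} and 0≤τ≤π/α) and every z∈Ω, the kernel identity (1/(2ζ))·[H₁(z^α,ζ^α) + H₁(conj(z^α), conj(ζ^α))] = [H₂(z^α,ζ^α) − H₂(conj(z^α), ζ^α)]·ζ^{α−1} holds. -/
open Complex MeasureTheory Real Filter

noncomputable section

/-- Argument normalized to `[0, 2π)`. -/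
def argS (z : ℂ) : ℝ := if 0 ≤ z.arg then z.arg else z.arg + 2 * π

/-- `z ^ β` with the argument of `z` taken in `[0, 2π)`. -/
def powA (β : ℝ) (z : ℂ) : ℂ :=
  Complex.exp ((β : ℂ) * ((Real.log (‖z‖) : ℂ) + Complex.I * (argS z : ℂ)))

/-- The open sector ring `Ω = {r < |z| < 1, 0 < arg z < π/α}`. -/
def Omega (r α : ℝ) : Set ℂ :=
  {z : ℂ | r < ‖z‖ ∧ ‖z‖ < 1 ∧ 0 < argS z ∧ argS z < π / α}

/-- The outer circular arc `Γ₁`. -/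
def Gamma1Set (α : ℝ) : Set ℂ :=
  (fun τ : ℝ => Complex.exp (Complex.I * τ)) '' Set.Icc 0 (π / α)

/-- The inner circular arc `Γ₂`. -/
def Gamma2Set (r α : ℝ) : Set ℂ :=
  (fun τ : ℝ => (r : ℂ) * Complex.exp (Complex.I * τ)) '' Set.Icc 0 (π / α)

/-- The boundary `∂Ω = [r,1] ∪ Γ₁ ∪ [ϖ,ω] ∪ Γ₂` of the sector ring. -/
def bdryOmega (r α : ℝ) : Set ℂ :=
  ((fun t : ℝ => (t : ℂ)) '' Set.Icc r 1) ∪ Gamma1Set α ∪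
    ((fun t : ℝ => (t : ℂ) * Complex.exp (Complex.I * (π / α))) '' Set.Icc r 1) ∪
    Gamma2Set r α

/-- `r^{2αn}` for `n ≥ 1` (here indexed from `0`). -/
def rp (r α : ℝ) (n : ℕ) : ℂ := ((r ^ (2 * α * ((n : ℝ) + 1)) : ℝ) : ℂ)

/-- The kernel `H₁`. -/
def H1 (r α : ℝ) (z ζ : ℂ) : ℂ :=
  (ζ + z) / (ζ - z) - ((starRingEnd ℂ) ζ + z) / ((starRingEnd ℂ) ζ - z) +
    2 * ∑' n : ℕ, rp r α n *
      (ζ / (rp r α n * ζ - z) - z / (rp r α n * z - ζ)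
        - (starRingEnd ℂ) ζ / (rp r α n * (starRingEnd ℂ) ζ - z)
        + z / (rp r α n * z - (starRingEnd ℂ) ζ))

/-- The kernel `H₂`. -/
def H2 (r α : ℝ) (z ζ : ℂ) : ℂ :=
  1 / (ζ - z) - z / (1 - z * ζ) +
    ∑' n : ℕ, rp r α n *
      (1 / (rp r α n * ζ - z) - z / (ζ * (rp r α n * z - ζ))
        - 1 / (ζ * (rp r α n - z * ζ)) + z / (rp r α n * z * ζ - 1))

/-- The Wirtinger derivative `∂/∂z̄ = ½(∂ₓ + i∂_y)`. -/
def dbar (w : ℂ → ℂ) : ℂ → ℂ := fun z =>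
  (1 / 2 : ℂ) * (fderiv ℝ w z 1 + Complex.I * fderiv ℝ w z Complex.I)

/-- The Wirtinger derivative `∂/∂z = ½(∂ₓ - i∂_y)`. -/
def dz (w : ℂ → ℂ) : ℂ → ℂ := fun z =>
  (1 / 2 : ℂ) * (fderiv ℝ w z 1 - Complex.I * fderiv ℝ w z Complex.I)

/-- `∂_{z̄}ⁿ w = f` on `Ω` in the distributional sense. -/
def DistribDbarPow (Ω : Set ℂ) (n : ℕ) (w f : ℂ → ℂ) : Prop :=
  ∀ φ : ℂ → ℂ, ContDiff ℝ (⊤ : ℕ∞) φ → HasCompactSupport φ → tsupport φ ⊆ Ω →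
    ∫ z in Ω, w z * (dbar^[n] φ) z = (-1 : ℂ) ^ n * ∫ z in Ω, f z * φ z

/-- Contour integral `∫_{Γ₁} F(ζ) dζ` (counter-clockwise). -/
def intGamma1 (α : ℝ) (F : ℂ → ℂ) : ℂ :=
  ∫ s in (0:ℝ)..(π / α),
    F (Complex.exp (Complex.I * s)) * (Complex.I * Complex.exp (Complex.I * s))

/-- Contour integral `∫_{Γ₂} F(ζ) dζ` (clockwise). -/
def intGamma2cw (r α : ℝ) (F : ℂ → ℂ) : ℂ :=
  - ∫ s in (0:ℝ)..(π / α),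
      F ((r : ℂ) * Complex.exp (Complex.I * s)) *
        ((r : ℂ) * Complex.I * Complex.exp (Complex.I * s))

/-- Contour integral `∫_{[r,1]} F(ζ) dζ`. -/
def intSegR (r : ℝ) (F : ℂ → ℂ) : ℂ := ∫ t in r..(1:ℝ), F (t : ℂ)

/-- Contour integral `∫_{[ϖ,ω]} F(ζ) dζ` (from `ϖ = e^{iπ/α}` to `ω = re^{iπ/α}`). -/
def intSegT (r α : ℝ) (F : ℂ → ℂ) : ℂ :=
  ∫ t in (1:ℝ)..r,
    F ((t : ℂ) * Complex.exp (Complex.I * (π / α))) * Complex.exp (Complex.I * (π / α))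

/-- Contour integral `∮_{∂Ω} F(ζ) dζ` (counter-clockwise). -/
def bdryInt (r α : ℝ) (F : ℂ → ℂ) : ℂ :=
  intSegR r F + intGamma1 α F + intSegT r α F + intGamma2cw r α F

/-- The open upper half ring `R⁺`. -/
def Rplus (r : ℝ) : Set ℂ := {z : ℂ | r < ‖z‖ ∧ ‖z‖ < 1 ∧ 0 < z.im}

lemma abs_powA (β : ℝ) (z : ℂ) (hz : z ≠ 0) :
    ‖(powA β z)‖ = (‖z‖) ^ β := by
  have h0 : 0 < ‖z‖ := by simpa [norm_pos_iff] using hz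
  rw [powA, Complex.norm_exp, Real.rpow_def_of_pos h0]
  congr 1
  simp [Complex.mul_re, Complex.add_re, Complex.add_im, Complex.I_re, Complex.I_im]
  ring

lemma exp_logArg (z : ℂ) (hz : z ≠ 0) :
    Complex.exp ((Real.log (‖z‖) : ℂ) + Complex.I * (argS z : ℂ)) = z := by
  have h0 : 0 < ‖z‖ := by simpa [norm_pos_iff] using hz
  rw [Complex.exp_add]
  have h1 : Complex.exp ((Real.log (‖z‖) : ℂ)) = (‖z‖ : ℂ) := by
    rw [← Complex.ofReal_exp, Real.exp_log h0]
  have h2 : Complex.exp (Complex.I * (argS z : ℂ)) = Complex.exp (Complex.I * (z.arg : ℂ)) := by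
    unfold argS
    split_ifs with h
    · rfl
    · push_cast
      rw [mul_add, Complex.exp_add, mul_comm (Complex.I) (2*(π:ℂ)), Complex.exp_two_pi_mul_I, mul_one]
  rw [h1, h2, mul_comm Complex.I _, Complex.norm_mul_exp_arg_mul_I]

lemma powA_mul_self (β : ℝ) (z : ℂ) (hz : z ≠ 0) :
    powA β z = powA (β - 1) z * z := by
  rw [powA, powA]
  set L := (Real.log (‖z‖) : ℂ) + Complex.I * (argS z : ℂ) with hLdef
  rw [show z = Complex.exp L from (exp_logArg z hz).symm, ← Complex.exp_add]
  congr 1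
  push_cast
  ring

lemma conj_powA_mul (β : ℝ) (z : ℂ) (hz : z ≠ 0) :
    (starRingEnd ℂ) (powA β z) * powA β z = ((‖z‖ ^ (2*β) : ℝ) : ℂ) := by
  have h0 : 0 < ‖z‖ := by simpa [norm_pos_iff] using hz
  rw [powA, ← Complex.exp_conj, ← Complex.exp_add]
  rw [Real.rpow_def_of_pos h0, Complex.ofReal_exp]
  congr 1
  simp only [map_mul, map_add, Complex.conj_ofReal, Complex.conj_I]
  push_cast
  ring

lemma abs_sub_lower (a b : ℂ) : ‖a‖ - ‖b‖ ≤ ‖(a - b)‖ := by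
  simpa using norm_sub_norm_le a b

lemma ne_zero_of_abs_lt {a b : ℂ} (h : ‖b‖ < ‖a‖) : a - b ≠ 0 := by
  intro hab
  have : ‖a‖ - ‖b‖ ≤ 0 := by
    simpa [hab] using abs_sub_lower a b
  linarith

lemma bnd {a b : ℂ} {m : ℝ} (hm : 0 < m) (hb : m ≤ ‖b‖)
    (ha : ‖a‖ ≤ 1) : ‖(a / b)‖ ≤ 1 / m := by
  rw [norm_div]
  have hb0 : 0 < ‖b‖ := lt_of_lt_of_le hm hb
  rw [div_le_div_iff₀ hb0 hm]
  nlinarith [norm_nonneg a]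

lemma norm4 (a b c d : ℂ) :
    ‖(a - b - c + d)‖ ≤ ‖a‖ + ‖b‖ + ‖c‖ + ‖d‖ := by
  have h1 := norm_add_le (a - b - c) d
  have h2 := norm_sub_le (a - b) c
  have h3 := norm_sub_le a b
  linarith

lemma summable_geom_mul (s : ℝ) (hs0 : 0 ≤ s) (hs1 : s < 1) (f : ℕ → ℂ) (C : ℝ)
    (hf : ∀ n, ‖(f n)‖ ≤ C) :
    Summable fun n => ((s ^ (n+1) : ℝ) : ℂ) * f n := by
  apply Summable.of_norm_bounded (g := fun n => s ^ n * (s * C))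
  · simpa using (summable_geometric_of_lt_one hs0 hs1).mul_right (s * C)
  · intro n
    have h2 : ‖(f n)‖ ≤ C := hf n
    have h3 : (0:ℝ) ≤ ‖(f n)‖ := norm_nonneg _
    have h4 : ‖((s ^ (n+1) : ℝ) : ℂ)‖ = s ^ (n+1) := by
      rw [Complex.norm_real, Real.norm_eq_abs, _root_.abs_of_nonneg (pow_nonneg hs0 _)]
    simp only [norm_mul, h4]
    calc s ^ (n+1) * ‖(f n)‖ ≤ s ^ (n+1) * C := by
          nlinarith [pow_nonneg hs0 (n+1)]
      _ = s ^ n * (s * C) := by ring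

lemma telescope_tsum (F : ℕ → ℂ) (hF : Tendsto F atTop (nhds 0))
    (hs : Summable fun n => F n - F (n + 1)) :
    ∑' n, (F n - F (n + 1)) = F 0 := by
  have h1 : Tendsto (fun N => ∑ i ∈ Finset.range N, (F i - F (i+1))) atTop
      (nhds (∑' n, (F n - F (n + 1)))) := hs.hasSum.tendsto_sum_nat
  have h2 : (fun N => ∑ i ∈ Finset.range N, (F i - F (i+1))) = fun N => F 0 - F N := by
    funext N; exact Finset.sum_range_sub' F N
  rw [h2] at h1
  have h3 : Tendsto (fun N => F 0 - F N) atTop (nhds (F 0 - 0)) :=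
    tendsto_const_nhds.sub hF
  have := tendsto_nhds_unique h1 h3
  simpa using this

lemma sub_ne_zero_abs {a b : ℂ} (h : ‖a‖ < ‖b‖) : a - b ≠ 0 := by
  intro he; rw [sub_eq_zero] at he; rw [he] at h; exact lt_irrefl _ h

lemma sub_ne_zero_abs' {a b : ℂ} (h : ‖b‖ < ‖a‖) : a - b ≠ 0 := by
  intro he; rw [sub_eq_zero] at he; rw [he] at h; exact lt_irrefl _ h

lemma sub_ne_zero_abs_ne {a b : ℂ} (h : ‖a‖ ≠ ‖b‖) : a - b ≠ 0 := by
  intro he; rw [sub_eq_zero] at he; exact h (by rw [he])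

lemma low {a b : ℂ} {m : ℝ} (h : ‖b‖ + m ≤ ‖a‖) :
    m ≤ ‖(b - a)‖ := by
  have h1 := abs_sub_lower a b
  have h2 : ‖(a - b)‖ = ‖(b - a)‖ := norm_sub_rev a b
  linarith

lemma cancel_left {W d : ℂ} (a : ℂ) (hW0 : W ≠ 0) (hd : d ≠ 0) :
    W * (a/(W*d)) = a/d := by
  field_simp

set_option maxHeartbeats 8000000 in
/-- Termwise identity, case `c = s` (inner arc). Here `σ` plays `(s:ℂ)`,
`t` plays `s^n`, `Wb` plays `conj W` with `Wb * W = σ`. -/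
lemma termwise_s (σ t Z X W Wb : ℂ) (hW0 : W ≠ 0)
    (hWb : Wb * W = σ)
    (d1 : t*σ*Wb - Z ≠ 0) (d2 : t*σ*σ - Z*W ≠ 0)
    (d3 : t*σ*Z - Wb ≠ 0) (d4 : t*(Z*W) - 1 ≠ 0)
    (d5 : t*σ*Wb - X ≠ 0) (d6 : t*σ*σ - X*W ≠ 0)
    (d7 : t*σ*X - Wb ≠ 0) (d8 : t*(X*W) - 1 ≠ 0)
    (d9 : t*σ*Z - W ≠ 0) (d10 : t*σ - Z*W ≠ 0)
    (d11 : t*σ*X - W ≠ 0) (d12 : t*σ - X*W ≠ 0) :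
    t*σ * (W/(t*σ*W - Z) - Z/(t*σ*Z - W) - Wb/(t*σ*Wb - Z) + Z/(t*σ*Z - Wb))
    + t*σ * (Wb/(t*σ*Wb - X) - X/(t*σ*X - Wb) - W/(t*σ*W - X) + X/(t*σ*X - W))
    - W * (t*σ * (1/(t*σ*W - Z) - Z/(W*(t*σ*Z - W)) - 1/(W*(t*σ - Z*W)) + Z/(t*σ*Z*W - 1)))
    + W * (t*σ * (1/(t*σ*W - X) - X/(W*(t*σ*X - W)) - 1/(W*(t*σ - X*W)) + X/(t*σ*X*W - 1)))
    = (t*σ/(t*σ - Z*W) + t*(Z*W)/(t*(Z*W) - 1)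
       - t*σ/(t*σ - X*W) - t*(X*W)/(t*(X*W) - 1))
      - (t*σ*σ/(t*σ*σ - Z*W) + t*σ*(Z*W)/(t*σ*(Z*W) - 1)
       - t*σ*σ/(t*σ*σ - X*W) - t*σ*(X*W)/(t*σ*(X*W) - 1)) := by
  have e1 : t*σ*Wb/(t*σ*Wb - Z) = t*σ*σ/(t*σ*σ - Z*W) := by
    rw [div_eq_div_iff d1 d2]; linear_combination (-(t*σ*Z)) * hWb
  have e3 : t*σ*Wb/(t*σ*Wb - X) = t*σ*σ/(t*σ*σ - X*W) := by
    rw [div_eq_div_iff d5 d6]; linear_combination (-(t*σ*X)) * hWb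
  have e2 : t*σ*Z/(t*σ*Z - Wb) = t*(Z*W)/(t*(Z*W) - 1) := by
    rw [div_eq_div_iff d3 d4]; linear_combination (t*Z) * hWb
  have e4 : t*σ*X/(t*σ*X - Wb) = t*(X*W)/(t*(X*W) - 1) := by
    rw [div_eq_div_iff d7 d8]; linear_combination (t*X) * hWb
  have e5 : W * (Z/(W*(t*σ*Z - W))) = Z/(t*σ*Z - W) := cancel_left Z hW0 d9
  have e6 : W * ((1:ℂ)/(W*(t*σ - Z*W))) = 1/(t*σ - Z*W) := cancel_left 1 hW0 d10
  have e7 : W * (X/(W*(t*σ*X - W))) = X/(t*σ*X - W) := cancel_left X hW0 d11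
  have e8 : W * ((1:ℂ)/(W*(t*σ - X*W))) = 1/(t*σ - X*W) := cancel_left 1 hW0 d12
  linear_combination (-1)*e1 + e3 + e2 - e4 + (t*σ)*e5 + (t*σ)*e6 - (t*σ)*e7 - (t*σ)*e8

set_option maxHeartbeats 8000000 in
/-- Termwise identity, case `c = 1` (outer arc): the bracket combination vanishes. -/
lemma termwise_1 (σ t Z X W Wb : ℂ) (hW0 : W ≠ 0)
    (hWb : Wb * W = 1)
    (d1 : t*σ*Wb - Z ≠ 0)
    (d3 : t*σ*Z - Wb ≠ 0) (d13 : t*σ*(Z*W) - 1 ≠ 0)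
    (d5 : t*σ*Wb - X ≠ 0)
    (d7 : t*σ*X - Wb ≠ 0) (d14 : t*σ*(X*W) - 1 ≠ 0)
    (d9 : t*σ*Z - W ≠ 0) (d10 : t*σ - Z*W ≠ 0)
    (d11 : t*σ*X - W ≠ 0) (d12 : t*σ - X*W ≠ 0) :
    t*σ * (W/(t*σ*W - Z) - Z/(t*σ*Z - W) - Wb/(t*σ*Wb - Z) + Z/(t*σ*Z - Wb))
    + t*σ * (Wb/(t*σ*Wb - X) - X/(t*σ*X - Wb) - W/(t*σ*W - X) + X/(t*σ*X - W))
    - W * (t*σ * (1/(t*σ*W - Z) - Z/(W*(t*σ*Z - W)) - 1/(W*(t*σ - Z*W)) + Z/(t*σ*Z*W - 1)))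
    + W * (t*σ * (1/(t*σ*W - X) - X/(W*(t*σ*X - W)) - 1/(W*(t*σ - X*W)) + X/(t*σ*X*W - 1)))
    = 0 := by
  have e1 : t*σ*Wb/(t*σ*Wb - Z) = t*σ/(t*σ - Z*W) := by
    rw [div_eq_div_iff d1 d10]; linear_combination (-(t*σ*Z)) * hWb
  have e3 : t*σ*Wb/(t*σ*Wb - X) = t*σ/(t*σ - X*W) := by
    rw [div_eq_div_iff d5 d12]; linear_combination (-(t*σ*X)) * hWb
  have e2 : t*σ*Z/(t*σ*Z - Wb) = t*σ*(Z*W)/(t*σ*(Z*W) - 1) := by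
    rw [div_eq_div_iff d3 d13]; linear_combination (t*σ*Z) * hWb
  have e4 : t*σ*X/(t*σ*X - Wb) = t*σ*(X*W)/(t*σ*(X*W) - 1) := by
    rw [div_eq_div_iff d7 d14]; linear_combination (t*σ*X) * hWb
  have e5 : W * (Z/(W*(t*σ*Z - W))) = Z/(t*σ*Z - W) := cancel_left Z hW0 d9
  have e6 : W * ((1:ℂ)/(W*(t*σ - Z*W))) = 1/(t*σ - Z*W) := cancel_left 1 hW0 d10
  have e7 : W * (X/(W*(t*σ*X - W))) = X/(t*σ*X - W) := cancel_left X hW0 d11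
  have e8 : W * ((1:ℂ)/(W*(t*σ - X*W))) = 1/(t*σ - X*W) := cancel_left 1 hW0 d12
  linear_combination (-1)*e1 + e3 + e2 - e4 + (t*σ)*e5 + (t*σ)*e6 - (t*σ)*e7 - (t*σ)*e8

set_option maxHeartbeats 4000000 in
lemma boundary_s (σ Z X W Wb : ℂ) (hWb : Wb * W = σ)
    (d1 : Wb - Z ≠ 0) (d2 : σ - Z*W ≠ 0) (d3 : Wb - X ≠ 0) (d4 : σ - X*W ≠ 0)
    (d5 : W - Z ≠ 0) (d6 : W - X ≠ 0) (d7 : 1 - Z*W ≠ 0) (d8 : 1 - X*W ≠ 0)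
    (d9 : Z*W - 1 ≠ 0) (d10 : X*W - 1 ≠ 0) :
    ((W+Z)/(W-Z) - (Wb+Z)/(Wb-Z)) + ((Wb+X)/(Wb-X) - (W+X)/(W-X))
     - 2*W*(1/(W-Z) - Z/(1-Z*W)) + 2*W*(1/(W-X) - X/(1-X*W))
     + 2*(σ/(σ-Z*W) + (Z*W)/(Z*W-1) - σ/(σ-X*W) - (X*W)/(X*W-1)) = 0 := by
  have f1 : (Wb+Z)/(Wb-Z) = (σ+Z*W)/(σ-Z*W) := by
    rw [div_eq_div_iff d1 d2]; linear_combination (-(2*Z)) * hWb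
  have f2 : (Wb+X)/(Wb-X) = (σ+X*W)/(σ-X*W) := by
    rw [div_eq_div_iff d3 d4]; linear_combination (-(2*X)) * hWb
  have t1 : (W-Z)/(W-Z) = 1 := div_self d5
  have t2 : (W-X)/(W-X) = 1 := div_self d6
  have t3 : (σ-Z*W)/(σ-Z*W) = 1 := div_self d2
  have t4 : (σ-X*W)/(σ-X*W) = 1 := div_self d4
  have h1 : (Z*W)/(Z*W-1) + (Z*W)/(1-Z*W) = 0 := by
    rw [div_add_div _ _ d9 d7, div_eq_zero_iff]; left; ring
  have h2 : (X*W)/(X*W-1) + (X*W)/(1-X*W) = 0 := by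
    rw [div_add_div _ _ d10 d8, div_eq_zero_iff]; left; ring
  linear_combination (-1)*f1 + f2 + (-1)*t1 + t2 + t3 + (-1)*t4 + 2*h1 + (-2)*h2

set_option maxHeartbeats 4000000 in
lemma boundary_1 (Z X W Wb : ℂ) (hWb : Wb * W = 1)
    (d1 : Wb - Z ≠ 0) (d3 : Wb - X ≠ 0)
    (d5 : W - Z ≠ 0) (d6 : W - X ≠ 0) (d7 : 1 - Z*W ≠ 0) (d8 : 1 - X*W ≠ 0) :
    ((W+Z)/(W-Z) - (Wb+Z)/(Wb-Z)) + ((Wb+X)/(Wb-X) - (W+X)/(W-X))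
     - 2*W*(1/(W-Z) - Z/(1-Z*W)) + 2*W*(1/(W-X) - X/(1-X*W)) = 0 := by
  have f1 : (Wb+Z)/(Wb-Z) = (1+Z*W)/(1-Z*W) := by
    rw [div_eq_div_iff d1 d7]; linear_combination (-(2*Z)) * hWb
  have f2 : (Wb+X)/(Wb-X) = (1+X*W)/(1-X*W) := by
    rw [div_eq_div_iff d3 d8]; linear_combination (-(2*X)) * hWb
  have t1 : (W-Z)/(W-Z) = 1 := div_self d5
  have t2 : (W-X)/(W-X) = 1 := div_self d6
  have t5 : (1-Z*W)/(1-Z*W) = 1 := div_self d7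
  have t6 : (1-X*W)/(1-X*W) = 1 := div_self d8
  linear_combination (-1)*f1 + f2 + (-1)*t1 + t2 + (-1)*t5 + t6

def Ftel (s : ℝ) (u v : ℂ) : ℕ → ℂ := fun m =>
  ((s^(m+1):ℝ):ℂ)/(((s^(m+1):ℝ):ℂ) - u) + ((s^m:ℝ):ℂ)*u/(((s^m:ℝ):ℂ)*u - 1)
  - ((s^(m+1):ℝ):ℂ)/(((s^(m+1):ℝ):ℂ) - v) - ((s^m:ℝ):ℂ)*v/(((s^m:ℝ):ℂ)*v - 1)

set_option maxHeartbeats 16000000 in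
lemma master (r α s c : ℝ) (Z W : ℂ)
    (hs0 : 0 < s) (hs1 : s < 1)
    (hrp : ∀ n : ℕ, rp r α n = ((s ^ (n+1) : ℝ) : ℂ))
    (hW1 : ‖W‖ ≤ 1) (hZ1 : ‖Z‖ < 1)
    (hsZ : s < ‖Z‖) (hsW : s < ‖W‖)
    (hsu : s < ‖Z‖ * ‖W‖)
    (hne : ‖Z‖ ≠ ‖W‖)
    (hc : (starRingEnd ℂ) W * W = ((c:ℝ):ℂ)) (hcase : c = 1 ∨ c = s) :
    H1 r α Z W + H1 r α ((starRingEnd ℂ) Z) ((starRingEnd ℂ) W)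
      = 2 * W * (H2 r α Z W - H2 r α ((starRingEnd ℂ) Z) W) := by
  simp only [H1, H2, Complex.conj_conj, hrp]
  set X := (starRingEnd ℂ) Z with hXdef
  set Wb := (starRingEnd ℂ) W with hWbdef
  have hss : 0 ≤ s := hs0.le
  have hZpos : 0 < ‖Z‖ := hs0.trans hsZ
  have hWpos : 0 < ‖W‖ := hs0.trans hsW
  have hW0 : W ≠ 0 := by
    intro h; rw [h] at hWpos; simp at hWpos
  have haX : ‖X‖ = ‖Z‖ := by rw [hXdef]; exact Complex.norm_conj Z
  have haWb : ‖Wb‖ = ‖W‖ := by rw [hWbdef]; exact Complex.norm_conj W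
  have haK : ∀ n:ℕ, ‖(((s^n :ℝ)):ℂ)‖ = s^n := fun n => by
    rw [Complex.norm_real, Real.norm_eq_abs, _root_.abs_of_nonneg (pow_nonneg hss n)]
  have haS : ‖((s:ℝ):ℂ)‖ = s := by
    rw [Complex.norm_real, Real.norm_eq_abs, _root_.abs_of_nonneg hss]
  have hpow1 : ∀ n:ℕ, s^n ≤ 1 := fun n => pow_le_one₀ hss hs1.le
  have hpow0 : ∀ n:ℕ, 0 ≤ s^n := fun n => pow_nonneg hss n
  have haZ0 : 0 ≤ ‖Z‖ := norm_nonneg Z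
  have haW0 : 0 ≤ ‖W‖ := norm_nonneg W
  have hZW1 : ‖Z‖ * ‖W‖ ≤ 1 := by nlinarith
  have hZW1s : ‖Z‖ * ‖W‖ < 1 := by nlinarith
  have base : ∀ n:ℕ, s^n * s ≤ s := fun n => by nlinarith [hpow1 n, hpow0 n]
  -- ∀-n denominator facts (in the `t*σ` form)
  have D1 : ∀ n:ℕ, ((s^n :ℝ):ℂ)*((s:ℝ):ℂ)*Wb - Z ≠ 0 := fun n => by
    apply sub_ne_zero_abs
    rw [norm_mul, norm_mul, haK, haS, haWb]
    nlinarith [base n, hpow0 n, hpow1 n, hZW1s, mul_nonneg haZ0 haW0]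
  have D2 : ∀ n:ℕ, ((s^n :ℝ):ℂ)*((s:ℝ):ℂ)*((s:ℝ):ℂ) - Z*W ≠ 0 := fun n => by
    apply sub_ne_zero_abs
    rw [norm_mul, norm_mul, norm_mul, haK, haS]
    nlinarith [base n, hpow0 n, hpow1 n, hZW1s, mul_nonneg haZ0 haW0]
  have D3 : ∀ n:ℕ, ((s^n :ℝ):ℂ)*((s:ℝ):ℂ)*Z - Wb ≠ 0 := fun n => by
    apply sub_ne_zero_abs
    rw [norm_mul, norm_mul, haK, haS, haWb]
    nlinarith [base n, hpow0 n, hpow1 n, hZW1s, mul_nonneg haZ0 haW0]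
  have D4 : ∀ n:ℕ, ((s^n :ℝ):ℂ)*(Z*W) - 1 ≠ 0 := fun n => by
    apply sub_ne_zero_abs
    rw [norm_mul, norm_mul, haK, norm_one]
    nlinarith [base n, hpow0 n, hpow1 n, hZW1s, mul_nonneg haZ0 haW0]
  have D5 : ∀ n:ℕ, ((s^n :ℝ):ℂ)*((s:ℝ):ℂ)*Wb - X ≠ 0 := fun n => by
    apply sub_ne_zero_abs
    rw [norm_mul, norm_mul, haK, haS, haWb, haX]
    nlinarith [base n, hpow0 n, hpow1 n, hZW1s, mul_nonneg haZ0 haW0]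
  have D6 : ∀ n:ℕ, ((s^n :ℝ):ℂ)*((s:ℝ):ℂ)*((s:ℝ):ℂ) - X*W ≠ 0 := fun n => by
    apply sub_ne_zero_abs
    rw [norm_mul, norm_mul, norm_mul, haK, haS, haX]
    nlinarith [base n, hpow0 n, hpow1 n, hZW1s, mul_nonneg haZ0 haW0]
  have D7 : ∀ n:ℕ, ((s^n :ℝ):ℂ)*((s:ℝ):ℂ)*X - Wb ≠ 0 := fun n => by
    apply sub_ne_zero_abs
    rw [norm_mul, norm_mul, haK, haS, haWb, haX]
    nlinarith [base n, hpow0 n, hpow1 n, hZW1s, mul_nonneg haZ0 haW0]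
  have D8 : ∀ n:ℕ, ((s^n :ℝ):ℂ)*(X*W) - 1 ≠ 0 := fun n => by
    apply sub_ne_zero_abs
    rw [norm_mul, norm_mul, haK, norm_one, haX]
    nlinarith [base n, hpow0 n, hpow1 n, hZW1s, mul_nonneg haZ0 haW0]
  have D9 : ∀ n:ℕ, ((s^n :ℝ):ℂ)*((s:ℝ):ℂ)*Z - W ≠ 0 := fun n => by
    apply sub_ne_zero_abs
    rw [norm_mul, norm_mul, haK, haS]
    nlinarith [base n, hpow0 n, hpow1 n, hZW1s, mul_nonneg haZ0 haW0]
  have D10 : ∀ n:ℕ, ((s^n :ℝ):ℂ)*((s:ℝ):ℂ) - Z*W ≠ 0 := fun n => by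
    apply sub_ne_zero_abs
    rw [norm_mul, norm_mul, haK, haS]
    nlinarith [base n, hpow0 n, hpow1 n, hZW1s, mul_nonneg haZ0 haW0]
  have D11 : ∀ n:ℕ, ((s^n :ℝ):ℂ)*((s:ℝ):ℂ)*X - W ≠ 0 := fun n => by
    apply sub_ne_zero_abs
    rw [norm_mul, norm_mul, haK, haS, haX]
    nlinarith [base n, hpow0 n, hpow1 n, hZW1s, mul_nonneg haZ0 haW0]
  have D12 : ∀ n:ℕ, ((s^n :ℝ):ℂ)*((s:ℝ):ℂ) - X*W ≠ 0 := fun n => by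
    apply sub_ne_zero_abs
    rw [norm_mul, norm_mul, haK, haS, haX]
    nlinarith [base n, hpow0 n, hpow1 n, hZW1s, mul_nonneg haZ0 haW0]
  have D13 : ∀ n:ℕ, ((s^n :ℝ):ℂ)*((s:ℝ):ℂ)*(Z*W) - 1 ≠ 0 := fun n => by
    apply sub_ne_zero_abs
    rw [norm_mul, norm_mul, norm_mul, haK, haS, norm_one]
    nlinarith [base n, hpow0 n, hpow1 n, hZW1s, mul_nonneg haZ0 haW0]
  have D14 : ∀ n:ℕ, ((s^n :ℝ):ℂ)*((s:ℝ):ℂ)*(X*W) - 1 ≠ 0 := fun n => by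
    apply sub_ne_zero_abs
    rw [norm_mul, norm_mul, norm_mul, haK, haS, norm_one, haX]
    nlinarith [base n, hpow0 n, hpow1 n, hZW1s, mul_nonneg haZ0 haW0]
  -- boundary denominator facts
  have E1 : Wb - Z ≠ 0 := sub_ne_zero_abs_ne (by rw [haWb]; exact hne.symm)
  have E3 : Wb - X ≠ 0 := sub_ne_zero_abs_ne (by rw [haWb, haX]; exact hne.symm)
  have E5 : W - Z ≠ 0 := sub_ne_zero_abs_ne hne.symm
  have E6 : W - X ≠ 0 := sub_ne_zero_abs_ne (by rw [haX]; exact hne.symm)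
  have E2 : ((s:ℝ):ℂ) - Z*W ≠ 0 := by
    apply sub_ne_zero_abs; rw [norm_mul, haS]; nlinarith
  have E4 : ((s:ℝ):ℂ) - X*W ≠ 0 := by
    apply sub_ne_zero_abs; rw [norm_mul, haS, haX]; nlinarith
  have E7 : (1:ℂ) - Z*W ≠ 0 := by
    apply sub_ne_zero_abs'; rw [norm_mul, norm_one]; nlinarith
  have E8 : (1:ℂ) - X*W ≠ 0 := by
    apply sub_ne_zero_abs'; rw [norm_mul, norm_one, haX]; nlinarith
  have E9 : Z*W - 1 ≠ 0 := by
    apply sub_ne_zero_abs; rw [norm_mul, norm_one]; nlinarith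
  have E10 : X*W - 1 ≠ 0 := by
    apply sub_ne_zero_abs; rw [norm_mul, norm_one, haX]; nlinarith
  -- lower bounds for denominators (with K n = cast (s^(n+1)))
  have hm1 : 0 < ‖Z‖ - s := by linarith
  have hm2 : 0 < ‖W‖ - s := by linarith
  have hm3 : 0 < ‖Z‖ * ‖W‖ - s := by linarith
  have hm4 : 0 < (1:ℝ) - s := by linarith
  have key : ∀ n:ℕ, s^(n+1) ≤ s := fun n => by rw [pow_succ]; exact base n
  have lb1 : ∀ n:ℕ, ‖Z‖ - s ≤ ‖(((s^(n+1):ℝ):ℂ)*W - Z)‖ := fun n => by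
    apply low; rw [norm_mul, haK]; nlinarith [key n, hpow0 (n+1), hZW1s, mul_nonneg haZ0 haW0]
  have lb2 : ∀ n:ℕ, ‖W‖ - s ≤ ‖(((s^(n+1):ℝ):ℂ)*Z - W)‖ := fun n => by
    apply low; rw [norm_mul, haK]; nlinarith [key n, hpow0 (n+1), hZW1s, mul_nonneg haZ0 haW0]
  have lb3 : ∀ n:ℕ, ‖Z‖ - s ≤ ‖(((s^(n+1):ℝ):ℂ)*Wb - Z)‖ := fun n => by
    apply low; rw [norm_mul, haK, haWb]; nlinarith [key n, hpow0 (n+1), hZW1s, mul_nonneg haZ0 haW0]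
  have lb4 : ∀ n:ℕ, ‖W‖ - s ≤ ‖(((s^(n+1):ℝ):ℂ)*Z - Wb)‖ := fun n => by
    apply low; rw [norm_mul, haK, haWb]; nlinarith [key n, hpow0 (n+1), hZW1s, mul_nonneg haZ0 haW0]
  have lb5 : ∀ n:ℕ, ‖Z‖ - s ≤ ‖(((s^(n+1):ℝ):ℂ)*Wb - X)‖ := fun n => by
    apply low; rw [norm_mul, haK, haWb, haX]; nlinarith [key n, hpow0 (n+1), hZW1s, mul_nonneg haZ0 haW0]
  have lb6 : ∀ n:ℕ, ‖W‖ - s ≤ ‖(((s^(n+1):ℝ):ℂ)*X - Wb)‖ := fun n => by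
    apply low; rw [norm_mul, haK, haWb, haX]; nlinarith [key n, hpow0 (n+1), hZW1s, mul_nonneg haZ0 haW0]
  have lb7 : ∀ n:ℕ, ‖Z‖ - s ≤ ‖(((s^(n+1):ℝ):ℂ)*W - X)‖ := fun n => by
    apply low; rw [norm_mul, haK, haX]; nlinarith [key n, hpow0 (n+1), hZW1s, mul_nonneg haZ0 haW0]
  have lb8 : ∀ n:ℕ, ‖W‖ - s ≤ ‖(((s^(n+1):ℝ):ℂ)*X - W)‖ := fun n => by
    apply low; rw [norm_mul, haK, haX]; nlinarith [key n, hpow0 (n+1), hZW1s, mul_nonneg haZ0 haW0]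
  have lb9 : ∀ n:ℕ, ‖Z‖ * ‖W‖ - s ≤ ‖(((s^(n+1):ℝ):ℂ) - Z*W)‖ := fun n => by
    apply low; rw [norm_mul, haK]; nlinarith [key n, hpow0 (n+1), hZW1s, mul_nonneg haZ0 haW0]
  have lb10 : ∀ n:ℕ, (1:ℝ) - s ≤ ‖(((s^(n+1):ℝ):ℂ)*Z*W - 1)‖ := fun n => by
    apply low; rw [norm_mul, norm_mul, haK, norm_one]; nlinarith [key n, hpow0 (n+1), hZW1s, mul_nonneg haZ0 haW0]
  have lb11 : ∀ n:ℕ, ‖Z‖ * ‖W‖ - s ≤ ‖(((s^(n+1):ℝ):ℂ) - X*W)‖ := fun n => by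
    apply low; rw [norm_mul, haK, haX]; nlinarith [key n, hpow0 (n+1), hZW1s, mul_nonneg haZ0 haW0]
  have lb12 : ∀ n:ℕ, (1:ℝ) - s ≤ ‖(((s^(n+1):ℝ):ℂ)*X*W - 1)‖ := fun n => by
    apply low; rw [norm_mul, norm_mul, haK, norm_one, haX]; nlinarith [key n, hpow0 (n+1), hZW1s, mul_nonneg haZ0 haW0]
  -- summability of the four series
  have sA : Summable (fun n : ℕ => ((s^(n+1):ℝ):ℂ) *
      (W/(((s^(n+1):ℝ):ℂ)*W - Z) - Z/(((s^(n+1):ℝ):ℂ)*Z - W)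
        - Wb/(((s^(n+1):ℝ):ℂ)*Wb - Z) + Z/(((s^(n+1):ℝ):ℂ)*Z - Wb))) := by
    apply summable_geom_mul s hss hs1 _
      (1/(‖Z‖ - s) + 1/(‖W‖ - s) + 1/(‖Z‖ - s) + 1/(‖W‖ - s))
    intro n
    have b1 := bnd hm1 (lb1 n) hW1
    have b2 := bnd hm2 (lb2 n) hZ1.le
    have b3 := bnd hm1 (lb3 n) (le_of_eq_of_le haWb hW1)
    have b4 := bnd hm2 (lb4 n) hZ1.le
    exact le_trans (norm4 _ _ _ _) (by linarith)
  have sB : Summable (fun n : ℕ => ((s^(n+1):ℝ):ℂ) *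
      (Wb/(((s^(n+1):ℝ):ℂ)*Wb - X) - X/(((s^(n+1):ℝ):ℂ)*X - Wb)
        - W/(((s^(n+1):ℝ):ℂ)*W - X) + X/(((s^(n+1):ℝ):ℂ)*X - W))) := by
    apply summable_geom_mul s hss hs1 _
      (1/(‖Z‖ - s) + 1/(‖W‖ - s) + 1/(‖Z‖ - s) + 1/(‖W‖ - s))
    intro n
    have hX1 : ‖X‖ ≤ 1 := le_of_eq_of_le haX hZ1.le
    have b1 := bnd hm1 (lb5 n) (le_of_eq_of_le haWb hW1)
    have b2 := bnd hm2 (lb6 n) hX1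
    have b3 := bnd hm1 (lb7 n) hW1
    have b4 := bnd hm2 (lb8 n) hX1
    exact le_trans (norm4 _ _ _ _) (by linarith)
  have sC : Summable (fun n : ℕ => ((s^(n+1):ℝ):ℂ) *
      (1/(((s^(n+1):ℝ):ℂ)*W - Z) - Z/(W*(((s^(n+1):ℝ):ℂ)*Z - W))
        - 1/(W*(((s^(n+1):ℝ):ℂ) - Z*W)) + Z/(((s^(n+1):ℝ):ℂ)*Z*W - 1))) := by
    apply summable_geom_mul s hss hs1 _
      (1/(‖Z‖ - s) + 1/(‖W‖ * (‖W‖ - s))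
        + 1/(‖W‖ * (‖Z‖ * ‖W‖ - s)) + 1/(1 - s))
    intro n
    have b1 := bnd hm1 (lb1 n) (by rw [norm_one])
    have c2 : ‖W‖ * (‖W‖ - s) ≤ ‖(W*(((s^(n+1):ℝ):ℂ)*Z - W))‖ := by
      rw [norm_mul]; exact mul_le_mul_of_nonneg_left (lb2 n) haW0
    have c3 : ‖W‖ * (‖Z‖ * ‖W‖ - s)
        ≤ ‖(W*(((s^(n+1):ℝ):ℂ) - Z*W))‖ := by
      rw [norm_mul]; exact mul_le_mul_of_nonneg_left (lb9 n) haW0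
    have b2 := bnd (mul_pos hWpos hm2) c2 hZ1.le
    have b3 := bnd (mul_pos hWpos hm3) c3 (by rw [norm_one])
    have b4 := bnd hm4 (lb10 n) hZ1.le
    exact le_trans (norm4 _ _ _ _) (by linarith)
  have sD : Summable (fun n : ℕ => ((s^(n+1):ℝ):ℂ) *
      (1/(((s^(n+1):ℝ):ℂ)*W - X) - X/(W*(((s^(n+1):ℝ):ℂ)*X - W))
        - 1/(W*(((s^(n+1):ℝ):ℂ) - X*W)) + X/(((s^(n+1):ℝ):ℂ)*X*W - 1))) := by
    apply summable_geom_mul s hss hs1 _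
      (1/(‖Z‖ - s) + 1/(‖W‖ * (‖W‖ - s))
        + 1/(‖W‖ * (‖Z‖ * ‖W‖ - s)) + 1/(1 - s))
    intro n
    have hX1 : ‖X‖ ≤ 1 := le_of_eq_of_le haX hZ1.le
    have b1 := bnd hm1 (lb7 n) (by rw [norm_one])
    have c2 : ‖W‖ * (‖W‖ - s) ≤ ‖(W*(((s^(n+1):ℝ):ℂ)*X - W))‖ := by
      rw [norm_mul]; exact mul_le_mul_of_nonneg_left (lb8 n) haW0
    have c3 : ‖W‖ * (‖Z‖ * ‖W‖ - s)
        ≤ ‖(W*(((s^(n+1):ℝ):ℂ) - X*W))‖ := by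
      rw [norm_mul]; exact mul_le_mul_of_nonneg_left (lb11 n) haW0
    have b2 := bnd (mul_pos hWpos hm2) c2 hX1
    have b3 := bnd (mul_pos hWpos hm3) c3 (by rw [norm_one])
    have b4 := bnd hm4 (lb12 n) hX1
    exact le_trans (norm4 _ _ _ _) (by linarith)
  -- combine the four tsums into one
  have hcomb : (∑' (n : ℕ), ((s^(n+1):ℝ):ℂ) *
        (W/(((s^(n+1):ℝ):ℂ)*W - Z) - Z/(((s^(n+1):ℝ):ℂ)*Z - W)
          - Wb/(((s^(n+1):ℝ):ℂ)*Wb - Z) + Z/(((s^(n+1):ℝ):ℂ)*Z - Wb)))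
      + (∑' (n : ℕ), ((s^(n+1):ℝ):ℂ) *
        (Wb/(((s^(n+1):ℝ):ℂ)*Wb - X) - X/(((s^(n+1):ℝ):ℂ)*X - Wb)
          - W/(((s^(n+1):ℝ):ℂ)*W - X) + X/(((s^(n+1):ℝ):ℂ)*X - W)))
      - W * (∑' (n : ℕ), ((s^(n+1):ℝ):ℂ) *
        (1/(((s^(n+1):ℝ):ℂ)*W - Z) - Z/(W*(((s^(n+1):ℝ):ℂ)*Z - W))
          - 1/(W*(((s^(n+1):ℝ):ℂ) - Z*W)) + Z/(((s^(n+1):ℝ):ℂ)*Z*W - 1)))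
      + W * (∑' (n : ℕ), ((s^(n+1):ℝ):ℂ) *
        (1/(((s^(n+1):ℝ):ℂ)*W - X) - X/(W*(((s^(n+1):ℝ):ℂ)*X - W))
          - 1/(W*(((s^(n+1):ℝ):ℂ) - X*W)) + X/(((s^(n+1):ℝ):ℂ)*X*W - 1)))
      = ∑' (n : ℕ), (((s^(n+1):ℝ):ℂ) *
        (W/(((s^(n+1):ℝ):ℂ)*W - Z) - Z/(((s^(n+1):ℝ):ℂ)*Z - W)
          - Wb/(((s^(n+1):ℝ):ℂ)*Wb - Z) + Z/(((s^(n+1):ℝ):ℂ)*Z - Wb))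
        + ((s^(n+1):ℝ):ℂ) *
        (Wb/(((s^(n+1):ℝ):ℂ)*Wb - X) - X/(((s^(n+1):ℝ):ℂ)*X - Wb)
          - W/(((s^(n+1):ℝ):ℂ)*W - X) + X/(((s^(n+1):ℝ):ℂ)*X - W))
        - W * (((s^(n+1):ℝ):ℂ) *
        (1/(((s^(n+1):ℝ):ℂ)*W - Z) - Z/(W*(((s^(n+1):ℝ):ℂ)*Z - W))
          - 1/(W*(((s^(n+1):ℝ):ℂ) - Z*W)) + Z/(((s^(n+1):ℝ):ℂ)*Z*W - 1)))
        + W * (((s^(n+1):ℝ):ℂ) *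
        (1/(((s^(n+1):ℝ):ℂ)*W - X) - X/(W*(((s^(n+1):ℝ):ℂ)*X - W))
          - 1/(W*(((s^(n+1):ℝ):ℂ) - X*W)) + X/(((s^(n+1):ℝ):ℂ)*X*W - 1)))) := by
    rw [Summable.tsum_add ((sA.add sB).sub (sC.mul_left W)) (sD.mul_left W),
        Summable.tsum_sub (sA.add sB) (sC.mul_left W), Summable.tsum_add sA sB,
        tsum_mul_left, tsum_mul_left]
  rcases hcase with h1 | h1
  · -- outer arc : c = 1
    have hWb1 : Wb * W = 1 := by rw [h1] at hc; simpa using hc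
    have hterm : ∀ n:ℕ, (((s^(n+1):ℝ):ℂ) *
        (W/(((s^(n+1):ℝ):ℂ)*W - Z) - Z/(((s^(n+1):ℝ):ℂ)*Z - W)
          - Wb/(((s^(n+1):ℝ):ℂ)*Wb - Z) + Z/(((s^(n+1):ℝ):ℂ)*Z - Wb))
        + ((s^(n+1):ℝ):ℂ) *
        (Wb/(((s^(n+1):ℝ):ℂ)*Wb - X) - X/(((s^(n+1):ℝ):ℂ)*X - Wb)
          - W/(((s^(n+1):ℝ):ℂ)*W - X) + X/(((s^(n+1):ℝ):ℂ)*X - W))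
        - W * (((s^(n+1):ℝ):ℂ) *
        (1/(((s^(n+1):ℝ):ℂ)*W - Z) - Z/(W*(((s^(n+1):ℝ):ℂ)*Z - W))
          - 1/(W*(((s^(n+1):ℝ):ℂ) - Z*W)) + Z/(((s^(n+1):ℝ):ℂ)*Z*W - 1)))
        + W * (((s^(n+1):ℝ):ℂ) *
        (1/(((s^(n+1):ℝ):ℂ)*W - X) - X/(W*(((s^(n+1):ℝ):ℂ)*X - W))
          - 1/(W*(((s^(n+1):ℝ):ℂ) - X*W)) + X/(((s^(n+1):ℝ):ℂ)*X*W - 1)))) = 0 := by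
      intro n
      rw [show ((s^(n+1):ℝ):ℂ) = ((s^n :ℝ):ℂ)*((s:ℝ):ℂ) from by push_cast; ring]
      exact termwise_1 ((s:ℝ):ℂ) ((s^n :ℝ):ℂ) Z X W Wb hW0 hWb1 (D1 n) (D3 n) (D13 n)
        (D5 n) (D7 n) (D14 n) (D9 n) (D10 n) (D11 n) (D12 n)
    have hT := hcomb.trans ((tsum_congr hterm).trans tsum_zero)
    have hbd := boundary_1 Z X W Wb hWb1 E1 E3 E5 E6 E7 E8
    linear_combination 2*hT + hbd
  · -- inner arc : c = s
    have hWbs : Wb * W = ((s:ℝ):ℂ) := by rw [h1] at hc; exact hc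
    have hterm : ∀ n:ℕ, (((s^(n+1):ℝ):ℂ) *
        (W/(((s^(n+1):ℝ):ℂ)*W - Z) - Z/(((s^(n+1):ℝ):ℂ)*Z - W)
          - Wb/(((s^(n+1):ℝ):ℂ)*Wb - Z) + Z/(((s^(n+1):ℝ):ℂ)*Z - Wb))
        + ((s^(n+1):ℝ):ℂ) *
        (Wb/(((s^(n+1):ℝ):ℂ)*Wb - X) - X/(((s^(n+1):ℝ):ℂ)*X - Wb)
          - W/(((s^(n+1):ℝ):ℂ)*W - X) + X/(((s^(n+1):ℝ):ℂ)*X - W))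
        - W * (((s^(n+1):ℝ):ℂ) *
        (1/(((s^(n+1):ℝ):ℂ)*W - Z) - Z/(W*(((s^(n+1):ℝ):ℂ)*Z - W))
          - 1/(W*(((s^(n+1):ℝ):ℂ) - Z*W)) + Z/(((s^(n+1):ℝ):ℂ)*Z*W - 1)))
        + W * (((s^(n+1):ℝ):ℂ) *
        (1/(((s^(n+1):ℝ):ℂ)*W - X) - X/(W*(((s^(n+1):ℝ):ℂ)*X - W))
          - 1/(W*(((s^(n+1):ℝ):ℂ) - X*W)) + X/(((s^(n+1):ℝ):ℂ)*X*W - 1))))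
        = Ftel s (Z*W) (X*W) n - Ftel s (Z*W) (X*W) (n+1) := by
      intro n
      simp only [Ftel]
      rw [show ((s^(n+1+1):ℝ):ℂ) = ((s^n :ℝ):ℂ)*((s:ℝ):ℂ)*((s:ℝ):ℂ) from by push_cast; ring,
          show ((s^(n+1):ℝ):ℂ) = ((s^n :ℝ):ℂ)*((s:ℝ):ℂ) from by push_cast; ring]
      exact termwise_s ((s:ℝ):ℂ) ((s^n :ℝ):ℂ) Z X W Wb hW0 hWbs (D1 n) (D2 n) (D3 n) (D4 n)
        (D5 n) (D6 n) (D7 n) (D8 n) (D9 n) (D10 n) (D11 n) (D12 n)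
    have hsum0 : Summable (fun n => Ftel s (Z*W) (X*W) n - Ftel s (Z*W) (X*W) (n+1)) :=
      Summable.congr (((sA.add sB).sub (sC.mul_left W)).add (sD.mul_left W)) hterm
    have hp : Tendsto (fun m:ℕ => ((s^m :ℝ):ℂ)) atTop (nhds 0) := by
      have h := tendsto_pow_atTop_nhds_zero_of_lt_one hss hs1
      have h2 := (Complex.continuous_ofReal.tendsto (0:ℝ)).comp h
      have h3 : Tendsto (fun n:ℕ => ((s^n :ℝ):ℂ)) atTop (nhds ((0:ℝ):ℂ)) := h2
      simpa using h3
    have hp1 : Tendsto (fun m:ℕ => ((s^(m+1):ℝ):ℂ)) atTop (nhds 0) := by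
      have := hp.comp (tendsto_add_atTop_nat 1)
      exact this
    have hZW0 : (0:ℂ) - Z*W ≠ 0 := by
      apply sub_ne_zero_abs; rw [norm_mul, norm_zero]; nlinarith
    have hXW0 : (0:ℂ) - X*W ≠ 0 := by
      apply sub_ne_zero_abs; rw [norm_mul, norm_zero, haX]; nlinarith
    have hZW1' : (0:ℂ)*(Z*W) - 1 ≠ 0 := by
      apply sub_ne_zero_abs; rw [norm_mul, norm_mul, norm_zero, norm_one]; norm_num
    have hXW1' : (0:ℂ)*(X*W) - 1 ≠ 0 := by
      apply sub_ne_zero_abs; rw [norm_mul, norm_mul, norm_zero, norm_one]; norm_num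
    have hlim : Tendsto (Ftel s (Z*W) (X*W)) atTop (nhds 0) := by
      have h1 := hp1.div (hp1.sub tendsto_const_nhds) hZW0
      have h2 := (hp.mul_const (Z*W)).div ((hp.mul_const (Z*W)).sub tendsto_const_nhds) hZW1'
      have h3 := hp1.div (hp1.sub tendsto_const_nhds) hXW0
      have h4 := (hp.mul_const (X*W)).div ((hp.mul_const (X*W)).sub tendsto_const_nhds) hXW1'
      have h5 := ((h1.add h2).sub h3).sub h4
      have : ((0:ℂ)/(0 - Z*W) + 0*(Z*W)/(0*(Z*W) - 1) - 0/(0 - X*W) - 0*(X*W)/(0*(X*W) - 1)) = 0 := by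
        simp
      rw [this] at h5
      exact h5
    have htel := telescope_tsum (Ftel s (Z*W) (X*W)) hlim hsum0
    have hF0 : Ftel s (Z*W) (X*W) 0 = ((s:ℝ):ℂ)/(((s:ℝ):ℂ) - Z*W) + (Z*W)/(Z*W - 1)
        - ((s:ℝ):ℂ)/(((s:ℝ):ℂ) - X*W) - (X*W)/(X*W - 1) := by
      simp [Ftel]
    have hT := hcomb.trans (((tsum_congr hterm).trans htel).trans hF0)
    have hbd := boundary_s ((s:ℝ):ℂ) Z X W Wb hWbs E1 E2 E3 E4 E5 E6 E7 E8 E9 E10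
    linear_combination 2*hT + hbd

/-- **Kernel identity on the circular arcs** (used in the proof of Lemma 3.1). -/
theorem kernel_identity_on_arcs
    (r α : ℝ) (hr0 : 0 < r) (hr1 : r < 1) (hα : 1 / 2 ≤ α) :
    ∀ ζ ∈ Gamma1Set α ∪ Gamma2Set r α, ∀ z ∈ Omega r α,
      (1 / (2 * ζ)) *
          (H1 r α (powA α z) (powA α ζ)
            + H1 r α ((starRingEnd ℂ) (powA α z)) ((starRingEnd ℂ) (powA α ζ)))
        = (H2 r α (powA α z) (powA α ζ)
            - H2 r α ((starRingEnd ℂ) (powA α z)) (powA α ζ)) * powA (α - 1) ζ := by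
  intro ζ hζ z hz
  obtain ⟨hz1, hz2, -, -⟩ := hz
  have hα0 : 0 < α := lt_of_lt_of_le (by norm_num) hα
  have hzabs : 0 < ‖z‖ := lt_trans hr0 hz1
  have hz0 : z ≠ 0 := by
    intro h; rw [h] at hzabs; simp at hzabs
  set s : ℝ := r ^ (2*α) with hsdef
  have hs0 : 0 < s := Real.rpow_pos_of_pos hr0 _
  have hs1 : s < 1 := Real.rpow_lt_one hr0.le hr1 (by linarith)
  have hrp : ∀ n : ℕ, rp r α n = ((s ^ (n+1) : ℝ) : ℂ) := by
    intro n
    unfold rp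
    congr 1
    have h1 : (2*α*((n:ℝ)+1)) = (2*α) * (((n+1 : ℕ)):ℝ) := by push_cast; ring
    rw [h1, Real.rpow_mul hr0.le, Real.rpow_natCast]
  have hsra : s < r ^ α := by
    rw [hsdef]
    exact Real.rpow_lt_rpow_of_exponent_gt hr0 hr1 (by linarith)
  have hra1 : r ^ α < 1 := Real.rpow_lt_one hr0.le hr1 hα0
  have hra0 : 0 < r ^ α := Real.rpow_pos_of_pos hr0 _
  have haZ : ‖(powA α z)‖ = ‖z‖ ^ α := abs_powA α z hz0
  have hZgt : r ^ α < ‖(powA α z)‖ := by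
    rw [haZ]; exact Real.rpow_lt_rpow hr0.le hz1 hα0
  have hZ1 : ‖(powA α z)‖ < 1 := by
    rw [haZ]; exact Real.rpow_lt_one (norm_nonneg z) hz2 hα0
  have hsZ : s < ‖(powA α z)‖ := lt_trans hsra hZgt
  -- case split on the two arcs
  rcases hζ with h | h
  · obtain ⟨τ, -, rfl⟩ := h
    beta_reduce
    have hζa : ‖(Complex.exp (Complex.I * τ))‖ = 1 := by
      rw [mul_comm]; exact Complex.norm_exp_ofReal_mul_I τ
    have hζ0 : Complex.exp (Complex.I * τ) ≠ 0 := Complex.exp_ne_zero _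
    have haW : ‖(powA α (Complex.exp (Complex.I * τ)))‖ = 1 := by
      rw [abs_powA α _ hζ0, hζa, Real.one_rpow]
    have hcW : (starRingEnd ℂ) (powA α (Complex.exp (Complex.I * τ)))
        * powA α (Complex.exp (Complex.I * τ)) = (((1:ℝ)):ℂ) := by
      rw [conj_powA_mul α _ hζ0, hζa, Real.one_rpow]
    have hmaster := master r α s 1 (powA α z) (powA α (Complex.exp (Complex.I * τ)))
      hs0 hs1 hrp (le_of_eq haW) hZ1 hsZ (by rw [haW]; exact hs1)
      (by rw [haW, mul_one]; exact hsZ) (by rw [haW]; exact ne_of_lt hZ1) hcW (Or.inl rfl)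
    have hpow := powA_mul_self α (Complex.exp (Complex.I * τ)) hζ0
    rw [hmaster, hpow]
    field_simp
  · obtain ⟨τ, -, rfl⟩ := h
    beta_reduce
    have hζa : ‖((r:ℂ) * Complex.exp (Complex.I * τ))‖ = r := by
      rw [norm_mul, mul_comm Complex.I, Complex.norm_exp_ofReal_mul_I, mul_one,
        Complex.norm_real, Real.norm_eq_abs, _root_.abs_of_nonneg hr0.le]
    have hζ0 : (r:ℂ) * Complex.exp (Complex.I * τ) ≠ 0 := by
      intro h
      rw [h] at hζa
      rw [norm_zero] at hζa
      exact absurd hζa.symm (ne_of_gt hr0)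
    have haW : ‖(powA α ((r:ℂ) * Complex.exp (Complex.I * τ)))‖ = r ^ α := by
      rw [abs_powA α _ hζ0, hζa]
    have hcW : (starRingEnd ℂ) (powA α ((r:ℂ) * Complex.exp (Complex.I * τ)))
        * powA α ((r:ℂ) * Complex.exp (Complex.I * τ)) = ((s:ℝ):ℂ) := by
      rw [conj_powA_mul α _ hζ0, hζa]
    have hsu : s < ‖(powA α z)‖ * ‖(powA α ((r:ℂ) * Complex.exp (Complex.I * τ)))‖ := by
      rw [haW, hsdef, show 2*α = α + α from by ring, Real.rpow_add hr0]
      exact mul_lt_mul_of_pos_right hZgt hra0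
    have hmaster := master r α s s (powA α z) (powA α ((r:ℂ) * Complex.exp (Complex.I * τ)))
      hs0 hs1 hrp (by rw [haW]; exact hra1.le) hZ1 hsZ (by rw [haW]; exact hsra)
      hsu (by rw [haW]; exact ne_of_gt hZgt) hcW (Or.inr rfl)
    have hpow := powA_mul_self α ((r:ℂ) * Complex.exp (Complex.I * τ)) hζ0
    rw [hmaster, hpow]
    field_simp
    have hr' : (r:ℂ) ≠ 0 := by exact_mod_cast hr0.ne'
    field_simp
end
end

section
/- Let 0<r<1 and α≥1/2. For every z on the boundary ∂Ω of the sector ring Ω and every ζ∈Ω, the kernel H₂ satisfies H₂(z^α,ζ^α) − H₂(conj(z^α), ζ^α) = 0; equivalently, the function G*(z,ζ) = ζ^{α−1}·[H₂(z^α,ζ^α) − H₂(conj(z^α), ζ^α)] vanishes for all (z,ζ)∈∂Ω×Ω. -/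
open Complex MeasureTheory Real Filter

noncomputable section

lemma sub_ne_of_abs_lt {x y : ℂ} (h : ‖x‖ < ‖y‖) : y - x ≠ 0 := by
  intro h0; rw [sub_eq_zero] at h0; rw [h0] at h; exact lt_irrefl _ h

lemma sub_ne_of_abs_lt' {x y : ℂ} (h : ‖x‖ < ‖y‖) : x - y ≠ 0 := by
  intro h0; rw [sub_eq_zero] at h0; rw [h0] at h; exact lt_irrefl _ h


lemma rp_eq_pow (r α : ℝ) (hr : 0 ≤ r) (n : ℕ) :
    rp r α n = ((r ^ (2 * α) : ℝ) : ℂ) ^ (n + 1) := by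
  unfold rp
  have h : r ^ (2 * α * ((n : ℝ) + 1)) = (r ^ (2 * α)) ^ (n + 1) := by
    rw [← Real.rpow_natCast (r ^ (2 * α)) (n + 1), ← Real.rpow_mul hr]
    push_cast
    ring_nf
  rw [h]
  push_cast
  ring


lemma denom_facts (r α : ℝ) (hr0 : 0 < r) (hr1 : r < 1) (hα : 0 < α) (u ζ : ℂ)
    (hu1 : r ^ α ≤ ‖u‖) (hu2 : ‖u‖ ≤ 1)
    (hζ1 : ‖ζ‖ < 1) (hζ2 : r ^ α < ‖ζ‖)
    (hne : ‖u‖ ≠ ‖ζ‖) :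
    (∀ k : ℕ, ((r ^ (2 * α) : ℝ) : ℂ) ^ (k + 1) * ζ - u ≠ 0) ∧
    (∀ k : ℕ, ((r ^ (2 * α) : ℝ) : ℂ) ^ k * u - ζ ≠ 0) ∧
    (∀ k : ℕ, ((r ^ (2 * α) : ℝ) : ℂ) ^ (k + 1) - u * ζ ≠ 0) ∧
    (∀ k : ℕ, ((r ^ (2 * α) : ℝ) : ℂ) ^ k * u * ζ - 1 ≠ 0) ∧
    ζ - u ≠ 0 ∧ 1 - u * ζ ≠ 0 := by
  set q : ℝ := r ^ α with hq
  set p : ℝ := r ^ (2 * α) with hp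
  have hq0 : 0 < q := Real.rpow_pos_of_pos hr0 α
  have hq1 : q < 1 := Real.rpow_lt_one hr0.le hr1 hα
  have hp0 : 0 < p := Real.rpow_pos_of_pos hr0 _
  have hpq : p < q := Real.rpow_lt_rpow_of_exponent_gt hr0 hr1 (by linarith)
  have hp1 : p < 1 := lt_trans hpq hq1
  have hqq : q * q = p := by
    rw [hq, hp, ← Real.rpow_add hr0]; ring_nf
  have habsP : ∀ k : ℕ, ‖((p : ℝ) : ℂ) ^ k‖ = p ^ k := by
    intro k; rw [norm_pow, Complex.norm_real, Real.norm_of_nonneg hp0.le]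
  have hpk : ∀ k : ℕ, p ^ (k + 1) ≤ p := fun k =>
    pow_le_of_le_one hp0.le hp1.le (Nat.succ_ne_zero k)
  have hpk1 : ∀ k : ℕ, p ^ k ≤ 1 := fun k => pow_le_one₀ hp0.le hp1.le
  have hu0 : 0 < ‖u‖ := lt_of_lt_of_le hq0 hu1
  have hζ0 : 0 < ‖ζ‖ := lt_trans hq0 hζ2
  refine ⟨?_, ?_, ?_, ?_, ?_, ?_⟩
  · intro k
    apply sub_ne_of_abs_lt'
    rw [norm_mul, habsP]
    have h1 : p ^ (k + 1) * ‖ζ‖ < p := by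
      nlinarith [hpk k, pow_pos hp0 (k + 1)]
    calc p ^ (k + 1) * ‖ζ‖ < p := h1
      _ < q := hpq
      _ ≤ ‖u‖ := hu1
  · intro k
    match k with
    | 0 =>
      simp only [pow_zero, one_mul]
      intro h0; rw [sub_eq_zero] at h0; exact hne (by rw [h0])
    | k + 1 =>
      apply sub_ne_of_abs_lt'
      rw [norm_mul, habsP]
      have h1 : p ^ (k + 1) * ‖u‖ ≤ p := by
        nlinarith [hpk k, pow_pos hp0 (k + 1)]
      calc p ^ (k + 1) * ‖u‖ ≤ p := h1
        _ < q := hpq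
        _ < ‖ζ‖ := hζ2
  · intro k
    apply sub_ne_of_abs_lt'
    rw [habsP, norm_mul]
    calc p ^ (k + 1) ≤ p := hpk k
      _ = q * q := hqq.symm
      _ < ‖u‖ * ‖ζ‖ := by nlinarith
  · intro k
    apply sub_ne_of_abs_lt'
    rw [norm_mul, norm_mul, habsP, norm_one]
    have h1 : p ^ k * ‖u‖ ≤ 1 := by nlinarith [hpk1 k, pow_pos hp0 k]
    have : p ^ k * ‖u‖ * ‖ζ‖ < 1 := by
      nlinarith [hpk1 k, pow_pos hp0 k, mul_pos (pow_pos hp0 k) hu0]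
    simpa using this
  · intro h0; rw [sub_eq_zero] at h0; exact hne (by rw [h0])
  · apply sub_ne_of_abs_lt
    rw [norm_mul, norm_one]
    nlinarith



lemma abs_sub_lower_s8 (x y : ℂ) (A B : ℝ) (hx : ‖x‖ ≤ A) (hy : B ≤ ‖y‖) :
    B - A ≤ ‖x - y‖ := by
  have h1 : ‖y‖ - ‖x‖ ≤ ‖x - y‖ := by
    rw [norm_sub_rev]
    exact norm_sub_norm_le y x
  linarith

lemma abs_div_le_of (x y : ℂ) (A δ : ℝ) (hδ : 0 < δ) (hx : ‖x‖ ≤ A)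
    (hy : δ ≤ ‖y‖) : ‖x / y‖ ≤ A / δ := by
  rw [norm_div]
  exact div_le_div₀ (le_trans (norm_nonneg x) hx) hx hδ hy

lemma summable_geom_div (p δ : ℝ) (hp0 : 0 < p) (hp1 : p < 1) (f : ℕ → ℂ)
    (h : ∀ n, ‖f (n + 1)‖ ≤ p ^ (n + 1) / δ) : Summable (fun n => f (n + 1)) := by
  apply Summable.of_norm_bounded (g := fun n => p / δ * p ^ n)
    ((summable_geometric_of_lt_one hp0.le hp1).mul_left _)
  intro n
  calc ‖f (n + 1)‖ ≤ p ^ (n + 1) / δ := h n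
    _ = p / δ * p ^ n := by rw [pow_succ]; ring




lemma H2_outer (r α : ℝ) (hr0 : 0 < r) (hr1 : r < 1) (hα : 0 < α) (w ζ : ℂ)
    (hw : ‖w‖ = 1) (hζ1 : ‖ζ‖ < 1) (hζ2 : r ^ α < ‖ζ‖) :
    H2 r α w⁻¹ ζ = H2 r α w ζ := by
  have hq0 : 0 < r ^ α := Real.rpow_pos_of_pos hr0 α
  have hq1 : r ^ α < 1 := Real.rpow_lt_one hr0.le hr1 hα
  have hw0 : w ≠ 0 := by
    intro h; rw [h, norm_zero] at hw; norm_num at hw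
  have hζ0 : ζ ≠ 0 := by
    intro h; rw [h, norm_zero] at hζ2; linarith
  have habsinv : ‖w⁻¹‖ = 1 := by rw [norm_inv, hw]; norm_num
  obtain ⟨hA, hB, hC, hD, hE, hF⟩ := denom_facts r α hr0 hr1 hα w ζ
    (by rw [hw]; exact hq1.le) (le_of_eq hw) hζ1 hζ2
    (by rw [hw]; exact fun h => absurd h.symm (ne_of_lt hζ1))
  obtain ⟨hA', hB', hC', hD', hE', hF'⟩ := denom_facts r α hr0 hr1 hα w⁻¹ ζ
    (by rw [habsinv]; exact hq1.le) (le_of_eq habsinv) hζ1 hζ2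
    (by rw [habsinv]; exact fun h => absurd h.symm (ne_of_lt hζ1))
  have hu : w⁻¹ * w = 1 := inv_mul_cancel₀ hw0
  unfold H2
  simp only [rp_eq_pow r α hr0.le]
  set P : ℂ := ((r ^ (2 * α) : ℝ) : ℂ) with hP
  congr 1
  · -- principal part
    have p1 : 1 / (ζ - w⁻¹) = -w / (1 - w * ζ) := by
      rw [div_eq_div_iff hE' hF]
      linear_combination -hu
    have p2 : w⁻¹ / (1 - w⁻¹ * ζ) = -1 / (ζ - w) := by
      rw [div_eq_div_iff hF' hE]
      linear_combination -hu
    rw [p1, p2]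
    ring
  · apply tsum_congr
    intro n
    congr 1
    have o1 : 1 / (P ^ (n + 1) * ζ - w⁻¹) = w / (P ^ (n + 1) * w * ζ - 1) := by
      rw [div_eq_div_iff (hA' n) (hD (n + 1))]
      linear_combination hu
    have o2 : w⁻¹ / (ζ * (P ^ (n + 1) * w⁻¹ - ζ)) = 1 / (ζ * (P ^ (n + 1) - w * ζ)) := by
      rw [div_eq_div_iff (mul_ne_zero hζ0 (hB' (n + 1))) (mul_ne_zero hζ0 (hC n))]
      linear_combination (-ζ^2) * hu
    have o3 : 1 / (ζ * (P ^ (n + 1) - w⁻¹ * ζ)) = w / (ζ * (P ^ (n + 1) * w - ζ)) := by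
      rw [div_eq_div_iff (mul_ne_zero hζ0 (hC' n)) (mul_ne_zero hζ0 (hB (n + 1)))]
      linear_combination ζ^2 * hu
    have o4 : w⁻¹ / (P ^ (n + 1) * w⁻¹ * ζ - 1) = 1 / (P ^ (n + 1) * ζ - w) := by
      rw [div_eq_div_iff (hD' (n + 1)) (hA n)]
      linear_combination -hu
    rw [o1, o2, o3, o4]
    ring



set_option maxHeartbeats 1000000 in
lemma H2_inner (r α : ℝ) (hr0 : 0 < r) (hr1 : r < 1) (hα : 0 < α) (w ζ : ℂ)
    (hw : ‖w‖ = r ^ α) (hζ1 : ‖ζ‖ < 1) (hζ2 : r ^ α < ‖ζ‖) :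
    H2 r α (((r ^ (2 * α) : ℝ) : ℂ) / w) ζ = H2 r α w ζ := by
  have hq0 : 0 < r ^ α := Real.rpow_pos_of_pos hr0 α
  have hq1 : r ^ α < 1 := Real.rpow_lt_one hr0.le hr1 hα
  have hp0 : 0 < r ^ (2 * α) := Real.rpow_pos_of_pos hr0 _
  have hpq : r ^ (2 * α) < r ^ α := Real.rpow_lt_rpow_of_exponent_gt hr0 hr1 (by linarith)
  have hp1 : r ^ (2 * α) < 1 := lt_trans hpq hq1
  have hqq : r ^ α * r ^ α = r ^ (2 * α) := by
    rw [← Real.rpow_add hr0]; ring_nf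
  have hw0 : w ≠ 0 := by
    intro h; rw [h, norm_zero] at hw; linarith
  have hζ0 : ζ ≠ 0 := by
    intro h; rw [h, norm_zero] at hζ2; linarith
  have hZ0 : 0 ≤ ‖ζ‖ := norm_nonneg ζ
  have hZ1 : ‖ζ‖ ≤ 1 := hζ1.le
  obtain ⟨hA, hB, hC, hD, hE, hF⟩ := denom_facts r α hr0 hr1 hα w ζ
    (le_of_eq hw.symm) (by rw [hw]; exact hq1.le) hζ1 hζ2
    (by rw [hw]; exact ne_of_lt hζ2)
  have habsu : ‖((r ^ (2 * α) : ℝ) : ℂ) / w‖ = r ^ α := by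
    rw [norm_div, Complex.norm_real, Real.norm_of_nonneg hp0.le, hw, ← hqq]
    field_simp
  obtain ⟨hA', hB', hC', hD', hE', hF'⟩ := denom_facts r α hr0 hr1 hα
    (((r ^ (2 * α) : ℝ) : ℂ) / w) ζ
    (le_of_eq habsu.symm) (by rw [habsu]; exact hq1.le) hζ1 hζ2
    (by rw [habsu]; exact ne_of_lt hζ2)
  unfold H2
  simp only [rp_eq_pow r α hr0.le]
  set P : ℂ := ((r ^ (2 * α) : ℝ) : ℂ) with hP
  obtain ⟨u, hu_def⟩ : ∃ x : ℂ, x = P / w := ⟨_, rfl⟩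
  rw [← hu_def] at hA' hB' hC' hD' hE' hF' ⊢
  have hu : u * w = P := by rw [hu_def]; exact div_mul_cancel₀ _ hw0
  have habsP : ‖P‖ = r ^ (2 * α) := by
    rw [hP, Complex.norm_real, Real.norm_of_nonneg hp0.le]
  have habsPk : ∀ k : ℕ, ‖P ^ k‖ = (r ^ (2 * α)) ^ k := by
    intro k; rw [norm_pow, habsP]
  have hpk : ∀ k : ℕ, (r ^ (2 * α)) ^ (k + 1) ≤ r ^ (2 * α) :=
    fun k => pow_le_of_le_one hp0.le hp1.le (Nat.succ_ne_zero k)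
  have hpkpos : ∀ k : ℕ, 0 < (r ^ (2 * α)) ^ k := fun k => pow_pos hp0 k
  obtain ⟨a, ha⟩ : ∃ f : ℕ → ℂ, f = fun k => P ^ k / (P ^ k * ζ - w) := ⟨_, rfl⟩
  obtain ⟨b, hb⟩ : ∃ f : ℕ → ℂ, f = fun k => -(P ^ k * w) / (ζ * (P ^ k * w - ζ)) := ⟨_, rfl⟩
  obtain ⟨c, hc⟩ : ∃ f : ℕ → ℂ, f = fun k => -(P ^ k) / (ζ * (P ^ k - w * ζ)) := ⟨_, rfl⟩
  obtain ⟨d, hd⟩ : ∃ f : ℕ → ℂ, f = fun k => (P ^ k * w) / (P ^ k * w * ζ - 1) := ⟨_, rfl⟩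
  -- summability of the four (shifted) families
  have hSa : Summable (fun n => a (n + 1)) := by
    apply summable_geom_div (r ^ (2 * α)) (r ^ α - r ^ (2 * α)) hp0 hp1
    intro n
    simp only [ha]
    apply abs_div_le_of _ _ _ _ (by linarith) (le_of_eq (habsPk (n + 1)))
    apply abs_sub_lower_s8 _ _ (r ^ (2 * α)) (r ^ α)
    · rw [norm_mul, habsPk]
      have h1 : (r ^ (2 * α)) ^ (n + 1) * ‖ζ‖ ≤ (r ^ (2 * α)) ^ (n + 1) :=
        mul_le_of_le_one_right (hpkpos _).le hZ1
      linarith [hpk n]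
    · rw [hw]
  have hSb : Summable (fun n => b (n + 1)) := by
    apply summable_geom_div (r ^ (2 * α)) (r ^ α * (r ^ α - r ^ (2 * α))) hp0 hp1
    intro n
    simp only [hb]
    apply abs_div_le_of _ _ _ _ (by nlinarith) ?_ ?_
    · rw [norm_neg, norm_mul, habsPk, hw]
      exact mul_le_of_le_one_right (hpkpos _).le hq1.le
    · rw [norm_mul]
      have h1 : r ^ α - r ^ (2 * α) ≤ ‖P ^ (n + 1) * w - ζ‖ := by
        apply abs_sub_lower_s8 _ _ (r ^ (2 * α)) (r ^ α)
        · rw [norm_mul, habsPk, hw]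
          have h2 : (r ^ (2 * α)) ^ (n + 1) * r ^ α ≤ (r ^ (2 * α)) ^ (n + 1) :=
            mul_le_of_le_one_right (hpkpos _).le hq1.le
          linarith [hpk n]
        · exact hζ2.le
      exact mul_le_mul hζ2.le h1 (by linarith) hZ0
  have hSc : Summable (fun n => c (n + 1)) := by
    have hδ : 0 < r ^ α * ‖ζ‖ - r ^ (2 * α) := by nlinarith
    apply summable_geom_div (r ^ (2 * α))
      (r ^ α * (r ^ α * ‖ζ‖ - r ^ (2 * α))) hp0 hp1
    intro n
    simp only [hc]
    apply abs_div_le_of _ _ _ _ (by nlinarith) ?_ ?_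
    · rw [norm_neg, habsPk]
    · rw [norm_mul]
      have h1 : r ^ α * ‖ζ‖ - r ^ (2 * α) ≤ ‖P ^ (n + 1) - w * ζ‖ := by
        apply abs_sub_lower_s8 _ _ (r ^ (2 * α)) (r ^ α * ‖ζ‖)
        · rw [habsPk]; exact hpk n
        · rw [norm_mul, hw]
      exact mul_le_mul hζ2.le h1 (by linarith) hZ0
  have hSd : Summable (fun n => d (n + 1)) := by
    apply summable_geom_div (r ^ (2 * α)) (1 - r ^ (2 * α)) hp0 hp1
    intro n
    simp only [hd]
    apply abs_div_le_of _ _ _ _ (by linarith) ?_ ?_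
    · rw [norm_mul, habsPk, hw]
      exact mul_le_of_le_one_right (hpkpos _).le hq1.le
    · apply abs_sub_lower_s8 _ _ (r ^ (2 * α)) 1
      · rw [norm_mul, norm_mul, habsPk, hw]
        have h2 : (r ^ (2 * α)) ^ (n + 1) * r ^ α ≤ (r ^ (2 * α)) ^ (n + 1) :=
          mul_le_of_le_one_right (hpkpos _).le hq1.le
        have h3 : (r ^ (2 * α)) ^ (n + 1) * r ^ α * ‖ζ‖
            ≤ (r ^ (2 * α)) ^ (n + 1) * r ^ α :=
          mul_le_of_le_one_right (by positivity) hZ1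
        linarith [hpk n]
      · rw [norm_one]
  have Sdb1 : Summable (fun n => d (n + 1) + b (n + 1)) := hSd.add hSb
  have Sac1 : Summable (fun n => a (n + 1) + c (n + 1)) := hSa.add hSc
  have Sdb : Summable (fun n => d n + b n) :=
    (summable_nat_add_iff (f := fun n => d n + b n) 1).mp Sdb1
  have Sac2 : Summable (fun n => a (n + 2) + c (n + 2)) :=
    (summable_nat_add_iff (f := fun n => a (n + 1) + c (n + 1)) 1).mpr Sac1
  -- pointwise identity for the w-side summand
  have hR : ∀ n : ℕ,
      P ^ (n + 1) * (1 / (P ^ (n + 1) * ζ - w) - w / (ζ * (P ^ (n + 1) * w - ζ))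
        - 1 / (ζ * (P ^ (n + 1) - w * ζ)) + w / (P ^ (n + 1) * w * ζ - 1))
      = (d (n + 1) + b (n + 1)) + (a (n + 1) + c (n + 1)) := by
    intro n
    simp only [ha, hb, hc, hd]
    ring
  -- pointwise identity for the u-side summand
  have hL : ∀ n : ℕ,
      P ^ (n + 1) * (1 / (P ^ (n + 1) * ζ - u) - u / (ζ * (P ^ (n + 1) * u - ζ))
        - 1 / (ζ * (P ^ (n + 1) - u * ζ)) + u / (P ^ (n + 1) * u * ζ - 1))
      = (d n + b n) + (a (n + 2) + c (n + 2)) := by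
    intro n
    have t1 : P ^ (n + 1) * (1 / (P ^ (n + 1) * ζ - u)) = P ^ n * w / (P ^ n * w * ζ - 1) := by
      rw [mul_one_div, div_eq_div_iff (hA' n) (hD n)]
      linear_combination (P ^ n) * hu
    have t2 : P ^ (n + 1) * (u / (ζ * (P ^ (n + 1) * u - ζ)))
        = P ^ (n + 2) / (ζ * (P ^ (n + 2) - w * ζ)) := by
      rw [← mul_div_assoc,
        div_eq_div_iff (mul_ne_zero hζ0 (hB' (n + 1))) (mul_ne_zero hζ0 (hC (n + 1)))]
      linear_combination (-ζ ^ 2 * P ^ (n + 1)) * hu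
    have t3 : P ^ (n + 1) * (1 / (ζ * (P ^ (n + 1) - u * ζ)))
        = P ^ n * w / (ζ * (P ^ n * w - ζ)) := by
      rw [mul_one_div, div_eq_div_iff (mul_ne_zero hζ0 (hC' n)) (mul_ne_zero hζ0 (hB n))]
      linear_combination (ζ ^ 2 * P ^ n) * hu
    have t4 : P ^ (n + 1) * (u / (P ^ (n + 1) * u * ζ - 1))
        = P ^ (n + 2) / (P ^ (n + 2) * ζ - w) := by
      rw [← mul_div_assoc, div_eq_div_iff (hD' (n + 1)) (hA (n + 1))]
      linear_combination (-P ^ (n + 1)) * hu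
    calc P ^ (n + 1) * (1 / (P ^ (n + 1) * ζ - u) - u / (ζ * (P ^ (n + 1) * u - ζ))
          - 1 / (ζ * (P ^ (n + 1) - u * ζ)) + u / (P ^ (n + 1) * u * ζ - 1))
        = P ^ (n + 1) * (1 / (P ^ (n + 1) * ζ - u))
          - P ^ (n + 1) * (u / (ζ * (P ^ (n + 1) * u - ζ)))
          - P ^ (n + 1) * (1 / (ζ * (P ^ (n + 1) - u * ζ)))
          + P ^ (n + 1) * (u / (P ^ (n + 1) * u * ζ - 1)) := by ring
      _ = P ^ n * w / (P ^ n * w * ζ - 1) - P ^ (n + 2) / (ζ * (P ^ (n + 2) - w * ζ))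
          - P ^ n * w / (ζ * (P ^ n * w - ζ)) + P ^ (n + 2) / (P ^ (n + 2) * ζ - w) := by
        rw [t1, t2, t3, t4]
      _ = (d n + b n) + (a (n + 2) + c (n + 2)) := by
        simp only [ha, hb, hc, hd]
        ring
  -- transform both tsums
  have hTL : (∑' n : ℕ, P ^ (n + 1) * (1 / (P ^ (n + 1) * ζ - u)
        - u / (ζ * (P ^ (n + 1) * u - ζ))
        - 1 / (ζ * (P ^ (n + 1) - u * ζ)) + u / (P ^ (n + 1) * u * ζ - 1)))
      = ((d 0 + b 0) + ∑' n : ℕ, (d (n + 1) + b (n + 1)))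
        + ((∑' n : ℕ, (a (n + 1) + c (n + 1))) - (a 1 + c 1)) := by
    rw [tsum_congr hL, Summable.tsum_add Sdb Sac2]
    congr 1
    · exact Summable.tsum_eq_zero_add Sdb
    · have h := Summable.tsum_eq_zero_add Sac1
      simp only [zero_add] at h
      have h2 : (∑' n : ℕ, (a (n + 1 + 1) + c (n + 1 + 1)))
          = ∑' n : ℕ, (a (n + 2) + c (n + 2)) := rfl
      rw [h2] at h
      linear_combination -h
  have hTR : (∑' n : ℕ, P ^ (n + 1) * (1 / (P ^ (n + 1) * ζ - w)
        - w / (ζ * (P ^ (n + 1) * w - ζ))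
        - 1 / (ζ * (P ^ (n + 1) - w * ζ)) + w / (P ^ (n + 1) * w * ζ - 1)))
      = (∑' n : ℕ, (d (n + 1) + b (n + 1))) + (∑' n : ℕ, (a (n + 1) + c (n + 1))) := by
    rw [tsum_congr hR, Summable.tsum_add Sdb1 Sac1]
  rw [hTL, hTR]
  -- scalar identity
  have hwζP : w * ζ - P ≠ 0 := by
    have h := hC 0
    rw [pow_one] at h
    intro h0; exact h (by linear_combination -h0)
  have hPζw : P * ζ - w ≠ 0 := by
    have h := hA 0
    rwa [pow_one] at h
  have hwζ1 : w * ζ - 1 ≠ 0 := by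
    have h := hD 0
    rwa [pow_zero, one_mul] at h
  have hwmζ : w - ζ ≠ 0 := by
    have h := hB 0
    rwa [pow_zero, one_mul] at h
  have hPwζ : P - w * ζ ≠ 0 := by
    have h := hC 0
    rwa [pow_one] at h
  have s1 : 1 / (ζ - u) = w / (w * ζ - P) := by
    rw [div_eq_div_iff hE' hwζP]
    linear_combination hu
  have s2 : u / (1 - u * ζ) = -P / (P * ζ - w) := by
    rw [div_eq_div_iff hF' hPζw]
    linear_combination -hu
  have m1 : w / (w * ζ - 1) = -(w / (1 - w * ζ)) := by
    rw [show w * ζ - 1 = -(1 - w * ζ) from by ring, div_neg]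
  have m2a : w / (w * ζ - P) = -w / (P - w * ζ) := by
    rw [show w * ζ - P = -(P - w * ζ) from by ring, div_neg, neg_div]
  have m2b : -w / (P - w * ζ) + P / (ζ * (P - w * ζ)) = 1 / ζ := by
    field_simp
    ring
  have m2c : -w / (ζ * (w - ζ)) + 1 / ζ = 1 / (ζ - w) := by
    rw [div_add_div _ _ (mul_ne_zero hζ0 hwmζ) hζ0, div_eq_div_iff (by exact mul_ne_zero (mul_ne_zero hζ0 hwmζ) hζ0) hE]
    ring
  have hscal : 1 / (ζ - u) - u / (1 - u * ζ) + ((d 0 + b 0) - (a 1 + c 1))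
      = 1 / (ζ - w) - w / (1 - w * ζ) := by
    rw [s1, s2]
    simp only [ha, hb, hc, hd, pow_zero, pow_one, one_mul]
    linear_combination m1 + m2a + m2b + m2c
  linear_combination hscal



lemma conj_powA (β : ℝ) (z : ℂ) (h : β * argS z = 0 ∨ β * argS z = π) :
    (starRingEnd ℂ) (powA β z) = powA β z := by
  unfold powA
  rw [← Complex.exp_conj]
  have hc : (starRingEnd ℂ) ((β : ℂ) * ((Real.log (‖z‖) : ℂ)
        + Complex.I * (argS z : ℂ)))
      = (β : ℂ) * ((Real.log (‖z‖) : ℂ) - Complex.I * (argS z : ℂ)) := by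
    rw [map_mul, map_add, map_mul, Complex.conj_ofReal, Complex.conj_ofReal,
      Complex.conj_ofReal, Complex.conj_I]
    ring
  rw [hc]
  have e1 : (β : ℂ) * ((Real.log (‖z‖) : ℂ) - Complex.I * (argS z : ℂ))
      = (β : ℂ) * ((Real.log (‖z‖) : ℂ) + Complex.I * (argS z : ℂ))
        + (-2 * Complex.I) * ((β * argS z : ℝ) : ℂ) := by
    push_cast
    ring
  rw [e1, Complex.exp_add]
  rcases h with h | h <;> rw [h]
  · simp
  · rw [show (-2 * Complex.I) * ((π : ℝ) : ℂ) = -(2 * (π : ℝ) * Complex.I) from by push_cast; ring,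
      Complex.exp_neg, Complex.exp_two_pi_mul_I, inv_one, mul_one]

lemma argS_nonneg_real (t : ℝ) (ht : 0 ≤ t) : argS (t : ℂ) = 0 := by
  unfold argS
  rw [Complex.arg_ofReal_of_nonneg ht]
  simp

lemma argS_mul_exp (t θ : ℝ) (ht : 0 < t) (h1 : 0 < θ) (h2 : θ < 2 * π) :
    argS ((t : ℂ) * Complex.exp (Complex.I * (θ : ℂ))) = θ := by
  unfold argS
  rcases le_or_gt θ π with hle | hgt
  · have harg : ((t : ℂ) * Complex.exp (Complex.I * (θ : ℂ))).arg = θ := by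
      rw [show Complex.I * (θ : ℂ) = (θ : ℂ) * Complex.I from by ring, Complex.exp_mul_I,
        Complex.arg_real_mul _ ht, Complex.arg_cos_add_sin_mul_I ⟨by linarith [Real.pi_pos], hle⟩]
    rw [harg, if_pos h1.le]
  · have hper : Complex.exp (Complex.I * (θ : ℂ)) = Complex.exp (((θ - 2 * π : ℝ) : ℂ) * Complex.I) := by
      rw [show ((θ - 2 * π : ℝ) : ℂ) * Complex.I
          = Complex.I * (θ : ℂ) + -(2 * (π : ℝ) * Complex.I) from by push_cast; ring,
        Complex.exp_add, Complex.exp_neg, Complex.exp_two_pi_mul_I, inv_one, mul_one]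
    have harg : ((t : ℂ) * Complex.exp (Complex.I * (θ : ℂ))).arg = θ - 2 * π := by
      rw [hper, Complex.exp_mul_I, Complex.arg_real_mul _ ht,
        Complex.arg_cos_add_sin_mul_I ⟨by linarith, by linarith [Real.pi_pos]⟩]
    rw [harg, if_neg (by push_neg; linarith), sub_add_cancel]

lemma abs_powA_s8 (β : ℝ) (z : ℂ) :
    ‖powA β z‖ = Real.exp (β * Real.log (‖z‖)) := by
  unfold powA
  rw [Complex.norm_exp]
  congr 1
  simp [Complex.mul_re, Complex.add_re, Complex.mul_im, Complex.add_im]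



/-- **Vanishing of `G*` on `∂Ω × Ω`** (used in the proof of Theorem 2.2). -/
theorem Gstar_vanishes_on_boundary
    (r α : ℝ) (hr0 : 0 < r) (hr1 : r < 1) (hα : 1 / 2 ≤ α) :
    ∀ z ∈ bdryOmega r α, ∀ ζ ∈ Omega r α,
      H2 r α (powA α z) (powA α ζ) - H2 r α ((starRingEnd ℂ) (powA α z)) (powA α ζ) = 0 ∧
      powA (α - 1) ζ *
          (H2 r α (powA α z) (powA α ζ)
            - H2 r α ((starRingEnd ℂ) (powA α z)) (powA α ζ)) = 0 := by
  have hα0 : 0 < α := by linarith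
  intro z hz ζ hζ
  obtain ⟨hζr, hζ1, -, -⟩ := hζ
  have hζpos : 0 < ‖ζ‖ := lt_trans hr0 hζr
  have hζ'1 : ‖powA α ζ‖ < 1 := by
    rw [abs_powA_s8]
    have hlog : Real.log (‖ζ‖) < 0 := Real.log_neg hζpos hζ1
    have h0 : α * Real.log (‖ζ‖) < 0 := by nlinarith
    calc Real.exp (α * Real.log (‖ζ‖)) < Real.exp 0 := Real.exp_lt_exp.mpr h0
      _ = 1 := Real.exp_zero
  have hζ'2 : r ^ α < ‖powA α ζ‖ := by
    rw [abs_powA_s8, Real.rpow_def_of_pos hr0]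
    apply Real.exp_lt_exp.mpr
    have hlog : Real.log r < Real.log (‖ζ‖) := Real.log_lt_log hr0 hζr
    nlinarith
  suffices hY : H2 r α ((starRingEnd ℂ) (powA α z)) (powA α ζ)
      = H2 r α (powA α z) (powA α ζ) by
    exact ⟨by rw [hY, sub_self], by rw [hY, sub_self, mul_zero]⟩
  have hqq : r ^ α * r ^ α = r ^ (2 * α) := by
    rw [← Real.rpow_add hr0]; ring_nf
  have hsegment : ∀ t : ℝ, r ≤ t →
      (starRingEnd ℂ) (powA α ((t : ℝ) : ℂ)) = powA α ((t : ℝ) : ℂ) := fun t hrt =>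
    conj_powA α _ (Or.inl (by rw [argS_nonneg_real t (by linarith)]; ring))
  simp only [bdryOmega, Gamma1Set, Gamma2Set, Set.mem_union, Set.mem_image] at hz
  rcases hz with ((⟨t, ht, rfl⟩ | ⟨τ, hτ, rfl⟩) | ⟨t, ht, rfl⟩) | ⟨τ, hτ, rfl⟩
  · -- segment [r,1]
    rw [hsegment t ht.1]
  · -- outer arc Γ₁
    have habsz : ‖Complex.exp (Complex.I * (τ : ℂ))‖ = 1 := by
      rw [Complex.norm_exp]
      simp
    have habsw : ‖powA α (Complex.exp (Complex.I * (τ : ℂ)))‖ = 1 := by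
      rw [abs_powA_s8, habsz, Real.log_one, mul_zero, Real.exp_zero]
    have hconj : (starRingEnd ℂ) (powA α (Complex.exp (Complex.I * (τ : ℂ))))
        = (powA α (Complex.exp (Complex.I * (τ : ℂ))))⁻¹ :=
      eq_inv_of_mul_eq_one_right (by
        rw [Complex.mul_conj, Complex.normSq_eq_norm_sq, habsw]; norm_num)
    rw [hconj]
    exact H2_outer r α hr0 hr1 hα0 _ _ habsw hζ'1 hζ'2
  · -- segment [ϖ, ω]
    have ht0 : 0 < t := lt_of_lt_of_le hr0 ht.1
    have hθ0 : 0 < π / α := div_pos Real.pi_pos hα0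
    have hθle : π / α ≤ 2 * π := by
      rw [div_le_iff₀ hα0]
      nlinarith [Real.pi_pos]
    have hcast : (↑π / ↑α : ℂ) = ((π / α : ℝ) : ℂ) := by push_cast; ring
    rw [hcast]
    rcases eq_or_lt_of_le hθle with heq | hlt
    · have hz1 : ((t : ℝ) : ℂ) * Complex.exp (Complex.I * ((π / α : ℝ) : ℂ)) = ((t : ℝ) : ℂ) := by
        rw [show ((π / α : ℝ) : ℂ) = ((2 * π : ℝ) : ℂ) from by rw [heq]]
        push_cast
        rw [show Complex.I * (2 * (π : ℂ)) = 2 * (π : ℂ) * Complex.I from by ring,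
          Complex.exp_two_pi_mul_I, mul_one]
      rw [hz1, hsegment t ht.1]
    · have hargS : argS (((t : ℝ) : ℂ) * Complex.exp (Complex.I * ((π / α : ℝ) : ℂ))) = π / α :=
        argS_mul_exp t (π / α) ht0 hθ0 hlt
      rw [conj_powA α _ (Or.inr (by rw [hargS]; field_simp))]
  · -- inner arc Γ₂
    have habsz : ‖(r : ℂ) * Complex.exp (Complex.I * (τ : ℂ))‖ = r := by
      rw [norm_mul, Complex.norm_real, Real.norm_of_nonneg hr0.le, Complex.norm_exp]
      simp
    have habsw : ‖powA α ((r : ℂ) * Complex.exp (Complex.I * (τ : ℂ)))‖ = r ^ α := by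
      rw [abs_powA_s8, habsz, Real.rpow_def_of_pos hr0]
      ring_nf
    have hw0 : powA α ((r : ℂ) * Complex.exp (Complex.I * (τ : ℂ))) ≠ 0 := Complex.exp_ne_zero _
    have hconj : (starRingEnd ℂ) (powA α ((r : ℂ) * Complex.exp (Complex.I * (τ : ℂ))))
        = ((r ^ (2 * α) : ℝ) : ℂ) / powA α ((r : ℂ) * Complex.exp (Complex.I * (τ : ℂ))) := by
      rw [eq_div_iff hw0, mul_comm]
      rw [Complex.mul_conj, Complex.normSq_eq_norm_sq, habsw]
      rw [show (r ^ α) ^ 2 = r ^ (2 * α) from by rw [sq, hqq]]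
    rw [hconj]
    exact H2_inner r α hr0 hr1 hα0 _ _ habsw hζ'1 hζ'2
end
end
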